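/- Poisson limit theorem: for fixed μ > 0 and fixed natural number x, the binomial probability B(x; n, μ/n) = C(n,x) (μ/n)^x (1 - μ/n)^{n-x} tends to μ^x e^{-μ} / x! as n → ∞. -/

import Mathlib

open Filter

theorem poisson_limit_theorem_general (μ : ℝ) (x : ℕ) :
    Tendsto (fun n : ℕ =>
        (n.choose x : ℝ) * (μ / n) ^ x * (1 - μ / n) ^ (n - x))
      atTop (nhds (μ ^ x * Real.exp (-μ) / x.factorial)) := by
  have hmean : Tendsto (fun n : ℕ => (n : ℝ) * (μ / n)) atTop (nhds μ) :=
    tendsto_const_nhds.congr' <| by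
      filter_upwards [eventually_ne_atTop 0] with n hn
      field_simp
  rw [mul_comm (μ ^ x)]
  exact ProbabilityTheory.tendsto_choose_mul_pow_of_tendsto_mul_atTop x hmean

theorem poisson_limit_theorem (μ : ℝ) (hμ : 0 < μ) (x : ℕ) :
    Tendsto (fun n : ℕ =>
        (n.choose x : ℝ) * (μ / n) ^ x * (1 - μ / n) ^ (n - x))
      atTop (nhds (μ ^ x * Real.exp (-μ) / x.factorial)) :=
  poisson_limit_theorem_general μ x
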